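/- For the ℕ²-gradation of the span of decorated planar rooted trees by (number of vertices, fertility of the root), the root-grafting permutative product ⋆ satisfies: Br(𝒟)(i,j) ⋆ Br(𝒟)(k,l) ⊆ Br(𝒟)(i+k, l+1), and for trees t₁ of bidegree (i,j) and t₂ of bidegree (k,l), the difference ⟨t₁; t₂⟩ − t₁ ⋆ t₂ lies in Br(𝒟)(i+k, l) (same root fertility). -/

import Mathlib

/-!
Grafting `t₁` on the root of `t₂` inserts `t₁` into the list of children of the root, so it adds
`size t₁` vertices and one root child. The brace product differs from `t₁ ⋆ t₂` exactly by the
graftings on non-root vertices; these happen inside one of the root's subtrees, so they keep the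
number of root children, and by mutual induction over trees and forests every grafting adds
`size t₁` vertices.
-/

/-- Planar rooted trees decorated by `D`. -/
inductive PTree (D : Type*) : Type _
  | node : D → List (PTree D) → PTree D

mutual
  /-- Number of vertices of a tree. -/
  def size {D : Type*} : PTree D → ℕ
    | .node _ l => 1 + sizeL l
  def sizeL {D : Type*} : List (PTree D) → ℕ
    | [] => 0
    | s :: rest => size s + sizeL rest
end

/-- Fertility of the root: number of children of the root. -/
def fert {D : Type*} : PTree D → ℕ
  | .node _ l => l.length

/-- `t ⋆ t'`: grafting of `t` on the root of `t'` in all possible planar positions. -/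
noncomputable def starB {D : Type*} (t : PTree D) : PTree D → (PTree D →₀ ℤ)
  | .node d l =>
      ((List.range (l.length + 1)).map fun i =>
        Finsupp.single (PTree.node d (l.insertIdx i t)) (1 : ℤ)).sum

mutual
  /-- The brace/pre-Lie product `⟨t; t'⟩`: the sum of all graftings of `t` on all
  vertices of `t'`, in all planar positions. -/
  noncomputable def brace {D : Type*} (t : PTree D) : PTree D → (PTree D →₀ ℤ)
    | .node d l =>
        starB t (.node d l) +
          (braceL t l).sum fun l' c => c • Finsupp.single (PTree.node d l') (1 : ℤ)

  noncomputable def braceL {D : Type*} (t : PTree D) :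
      List (PTree D) → (List (PTree D) →₀ ℤ)
    | [] => 0
    | s :: rest =>
        ((brace t s).sum fun r c => c • Finsupp.single (r :: rest) (1 : ℤ)) +
          ((braceL t rest).sum fun l' c => c • Finsupp.single (s :: l') (1 : ℤ))
end

open Finsupp

namespace Finsupp

variable {α β γ R M : Type*}

lemma exists_mem_of_mem_support_list_sum [AddMonoid M] {L : List (α →₀ M)} {a : α}
    (ha : a ∈ L.sum.support) : ∃ f ∈ L, a ∈ f.support := by
  classical
  induction L with
  | nil => simp at ha
  | cons f L ih =>
    rw [List.sum_cons] at ha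
    rcases Finset.mem_union.1 (support_add ha) with ha | ha
    · exact ⟨f, List.mem_cons_self, ha⟩
    · obtain ⟨g, hg, hag⟩ := ih ha
      exact ⟨g, List.mem_cons_of_mem f hg, hag⟩

lemma exists_eq_of_mem_support_sum_smul_single_one [Semiring R] {f : β →₀ R} {h : β → γ}
    {c : γ} (hc : c ∈ (f.sum fun b r => r • single (h b) (1 : R)).support) :
    ∃ b ∈ f.support, h b = c := by
  classical
  have hmap : (f.sum fun b r => r • single (h b) (1 : R)) = mapDomain h f := by
    simp only [smul_single_one]
    rfl
  rw [hmap] at hc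
  exact Finset.mem_image.1 (mapDomain_support hc)

end Finsupp

namespace PTree

variable {D : Type*}

lemma sizeL_eq_sum_map_size : ∀ l : List (PTree D), sizeL l = (l.map size).sum
  | [] => rfl
  | s :: rest => by rw [sizeL, sizeL_eq_sum_map_size rest, List.map_cons, List.sum_cons]

lemma sizeL_insertIdx {t : PTree D} {l : List (PTree D)} {n : ℕ} (hn : n ≤ l.length) :
    sizeL (l.insertIdx n t) = size t + sizeL l := by
  rw [sizeL_eq_sum_map_size, ((List.perm_insertIdx t l hn).map size).sum_eq,
    List.map_cons, List.sum_cons, sizeL_eq_sum_map_size]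

lemma exists_eq_insertIdx_of_mem_support_starB {t : PTree D} {d : D} {l : List (PTree D)}
    {s : PTree D} (hs : s ∈ (starB t (.node d l)).support) :
    ∃ n ≤ l.length, s = .node d (l.insertIdx n t) := by
  obtain ⟨f, hf, hsf⟩ := exists_mem_of_mem_support_list_sum hs
  obtain ⟨n, hn, rfl⟩ := List.mem_map.1 hf
  exact ⟨n, Nat.lt_succ_iff.1 (List.mem_range.1 hn), by simpa using support_single_subset hsf⟩

lemma bidegree_of_mem_support_starB {t : PTree D} :
    ∀ {t' s : PTree D}, s ∈ (starB t t').support →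
      size s = size t + size t' ∧ fert s = fert t' + 1
  | .node d l, s, hs => by
    obtain ⟨n, hn, rfl⟩ := exists_eq_insertIdx_of_mem_support_starB hs
    refine ⟨?_, ?_⟩
    · rw [size, size, sizeL_insertIdx hn]
      omega
    · simp [fert, List.length_insertIdx, hn]

mutual

lemma size_of_mem_support_brace {t : PTree D} :
    ∀ {t' s : PTree D}, s ∈ (brace t t').support → size s = size t + size t'
  | .node d l, s, hs => by
    classical
    rw [brace] at hs
    rcases Finset.mem_union.1 (support_add hs) with hs | hs
    · exact (bidegree_of_mem_support_starB hs).1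
    · obtain ⟨l', hl', rfl⟩ := exists_eq_of_mem_support_sum_smul_single_one hs
      rw [size, size, (sizeL_and_length_of_mem_support_braceL hl').1]
      omega

lemma sizeL_and_length_of_mem_support_braceL {t : PTree D} :
    ∀ {l l' : List (PTree D)}, l' ∈ (braceL t l).support →
      sizeL l' = size t + sizeL l ∧ l'.length = l.length
  | [], l', hl' => by simp [braceL] at hl'
  | s :: rest, l', hl' => by
    classical
    rw [braceL] at hl'
    rcases Finset.mem_union.1 (support_add hl') with hl' | hl'
    · obtain ⟨r, hr, rfl⟩ := exists_eq_of_mem_support_sum_smul_single_one hl'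
      refine ⟨?_, rfl⟩
      rw [sizeL, sizeL, size_of_mem_support_brace hr]
      omega
    · obtain ⟨l'', hl'', rfl⟩ := exists_eq_of_mem_support_sum_smul_single_one hl'
      obtain ⟨hsize, hlength⟩ := sizeL_and_length_of_mem_support_braceL hl''
      refine ⟨?_, by rw [List.length_cons, List.length_cons, hlength]⟩
      rw [sizeL, sizeL, hsize]
      omega

end

lemma brace_sub_starB_node (t : PTree D) (d : D) (l : List (PTree D)) :
    brace t (.node d l) - starB t (.node d l) =
      (braceL t l).sum fun l' c => c • single (PTree.node d l') (1 : ℤ) := by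
  rw [brace, add_sub_cancel_left]

lemma bidegree_of_mem_support_brace_sub_starB {t : PTree D} :
    ∀ {t' s : PTree D}, s ∈ (brace t t' - starB t t').support →
      size s = size t + size t' ∧ fert s = fert t'
  | .node d l, s, hs => by
    rw [brace_sub_starB_node] at hs
    obtain ⟨l', hl', rfl⟩ := exists_eq_of_mem_support_sum_smul_single_one hs
    obtain ⟨hsize, hlength⟩ := sizeL_and_length_of_mem_support_braceL hl'
    refine ⟨?_, hlength⟩
    rw [size, size, hsize]
    omega

end PTree

/-- For the `ℕ²`-gradation of `Br(𝒟)` by (number of vertices, fertility of the root):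
`Br(𝒟)(i,j) ⋆ Br(𝒟)(k,l) ⊆ Br(𝒟)(i+k, l+1)`, and
`⟨t₁; t₂⟩ − t₁ ⋆ t₂ ∈ Br(𝒟)(i+k, l)`. -/
theorem bigraded_star_brace {D : Type*} (t₁ t₂ : PTree D) (i j k l : ℕ)
    (h₁ : size t₁ = i ∧ fert t₁ = j) (h₂ : size t₂ = k ∧ fert t₂ = l) :
    (∀ s ∈ (starB t₁ t₂).support, size s = i + k ∧ fert s = l + 1) ∧
    (∀ s ∈ (brace t₁ t₂ - starB t₁ t₂).support, size s = i + k ∧ fert s = l) := by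
  obtain ⟨rfl, -⟩ := h₁
  obtain ⟨rfl, rfl⟩ := h₂
  exact ⟨fun _ hs => PTree.bidegree_of_mem_support_starB hs,
    fun _ hs => PTree.bidegree_of_mem_support_brace_sub_starB hs⟩
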